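/- arXiv:0912.2088 — 4 statements merged into one kernel-verified Lean document; each statement's English description precedes it below -/
import Mathlib

section
/- Left Ore condition (LF2) for E-weak equivalences: for every pair of morphisms s : A → B and f : A → C in T with s ∈ W, there exist a morphism g : B → D in T and a morphism t : C → D in W such that g ∘ s = t ∘ f. -/
open CategoryTheory Category Limits Pretriangulated Triangulated

namespace CategoryTheory.Triangulated

/-- The structure `Triangulated.Subcategory` of the December 2024 Mathlib
(removed since), restored with its old fields. -/
structure Subcategory (C : Type*) [Category C] [HasZeroObject C] [HasShift C ℤ]
    [Preadditive C] [∀ (n : ℤ), (shiftFunctor C n).Additive] [Pretriangulated C] where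
  P : C → Prop
  zero' : ∃ (Z : C) (_ : IsZero Z), P Z
  shift (X : C) (n : ℤ) : P X → P (X⟦n⟧)
  ext₂' (T : Triangle C) (_ : T ∈ distTriang C) : P T.obj₁ → P T.obj₃ →
    ObjectProperty.isoClosure P T.obj₂

/-- The old `Triangulated.Subcategory.W`: morphisms whose cone satisfies `S.P`. -/
def Subcategory.W {C : Type*} [Category C] [HasZeroObject C] [HasShift C ℤ]
    [Preadditive C] [∀ (n : ℤ), (shiftFunctor C n).Additive] [Pretriangulated C]
    (S : Subcategory C) : MorphismProperty C :=
  fun X Y f => ∃ (Z : C) (g : Y ⟶ Z) (h : Z ⟶ X⟦(1 : ℤ)⟧)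
    (_ : Triangle.mk f g h ∈ distTriang C), S.P Z

end CategoryTheory.Triangulated

namespace CategoryTheory.Triangulated.Subcategory

variable {T : Type*} [Category T] [HasZeroObject T] [Preadditive T] [HasShift T ℤ]
  [∀ n : ℤ, (shiftFunctor T n).Additive] [Pretriangulated T]

lemma W_mor₂_of_distTriang (E : Subcategory T) (τ : Triangle T) (hτ : τ ∈ distTriang T)
    (h₁ : E.P τ.obj₁) : E.W τ.mor₂ :=
  ⟨_, τ.mor₃, _, rot_of_distTriang _ hτ, E.shift _ _ h₁⟩

end CategoryTheory.Triangulated.Subcategory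

/-- **Left Ore condition (LF2) for `E`-weak equivalences.**
For every pair of morphisms `s : A ⟶ B` and `f : A ⟶ C` in a triangulated
category `T`, where `s` is an `E`-weak equivalence for a thick subcategory `E`,
there are a morphism `g : B ⟶ D` and an `E`-weak equivalence `t : C ⟶ D`
such that `g ∘ s = t ∘ f`. -/
theorem left_ore_condition {T : Type*} [Category T] [HasZeroObject T] [Preadditive T]
    [HasShift T ℤ] [∀ n : ℤ, (shiftFunctor T n).Additive] [Pretriangulated T]
    [IsTriangulated T] (E : Triangulated.Subcategory T) [ObjectProperty.IsClosedUnderIsomorphisms E.P]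
    (hthick : ∀ ⦃X Y : T⦄ (i : X ⟶ Y) (r : Y ⟶ X), i ≫ r = 𝟙 X → E.P Y → E.P X)
    {A B C : T} (s : A ⟶ B) (f : A ⟶ C) (hs : E.W s) :
    ∃ (D : T) (g : B ⟶ D) (t : C ⟶ D), E.W t ∧ s ≫ g = f ≫ t := by
  obtain ⟨Z, g, h, hsτ, hZ⟩ := hs
  -- `s` is the cone of its fibre `u : Z⟦-1⟧ ⟶ A`; the cone `t` of `u ≫ f` has the same fibre.
  set σ := (Triangle.mk s g h).invRotate
  have hσ : σ ∈ distTriang T := inv_rot_of_distTriang _ hsτ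
  obtain ⟨D, t, _, hτ⟩ := distinguished_cocone_triangle (σ.mor₁ ≫ f)
  obtain ⟨c, hc, -⟩ :=
    complete_distinguished_triangle_morphism _ _ hσ hτ (𝟙 _) f (id_comp _).symm
  exact ⟨D, c, t, E.W_mor₂_of_distTriang _ hτ (E.shift _ _ hZ), hc⟩
end

section
/- The colocalisation bifunctor is cohomological in its first variable: for objects A, B of T set T⊥(A,B) := colim over Subo(B) of the diagram (s : E → B) ↦ Hom_T(A, E). Then for every distinguished triangle A' → A → A'' → A'[1] in T, the sequence T⊥(A'', B) → T⊥(A, B) → T⊥(A', B), with maps induced by precomposition with A → A'' and A' → A, is exact at T⊥(A, B). -/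
/-!
Since `E` is closed under direct sums and cones, `Subo(B)` is filtered: two objects map to their
sum, and two parallel morphisms are equalised by the cone of their difference. Hence `T⊥(-, B)`
is a filtered colimit of the cohomological functors `Hom_T(-, X)`. The composite of the two maps
vanishes by functoriality, and a class killed by precomposition with `A' ⟶ A` is already killed
at some stage `X` of the colimit, where it lifts along `A ⟶ A''`.
-/

open CategoryTheory Category Limits Pretriangulated Triangulated

universe u

namespace Triangulated

/-- The pre-2025 Mathlib structure `Triangulated.Subcategory`, restored with its old meaning. -/
structure Subcategory (C : Type*) [Category C] [HasZeroObject C] [HasShift C ℤ] [Preadditive C]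
    [∀ n : ℤ, (shiftFunctor C n).Additive] [Pretriangulated C] where
  P : C → Prop
  zero' : ∃ (Z : C) (_ : IsZero Z), P Z
  shift (X : C) (n : ℤ) : P X → P (X⟦n⟧)
  ext₂' (T : Triangle C) (_ : T ∈ distTriang C) : P T.obj₁ → P T.obj₃ →
    ObjectProperty.isoClosure P T.obj₂

end Triangulated

variable {T : Type u} [SmallCategory T] [HasZeroObject T] [Preadditive T]
  [HasShift T ℤ] [∀ n : ℤ, (shiftFunctor T n).Additive] [Pretriangulated T]

variable (E : Triangulated.Subcategory T)

/-- `Subo(B)`: full subcategory of `Over B` on morphisms `s : X ⟶ B` with `X` in `E`. -/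
abbrev SuboCat (B : T) := ObjectProperty.FullSubcategory (fun f : Over B => E.P f.left)

/-- The diagram `(s : X ⟶ B) ↦ F(X)` on `Subo(B)`. -/
def suboDiagram (F : T ⥤ Ab.{u}) (B : T) : SuboCat E B ⥤ Ab.{u} :=
  ObjectProperty.ι _ ⋙ Over.forget B ⋙ F

/-- The right colocalisation `R⊥F(B) := colim_{Subo(B)} F(X)`. -/
noncomputable abbrev coloc (F : T ⥤ Ab.{u}) (B : T) : Ab.{u} :=
  colimit (suboDiagram E F B)

/-- The diagram `(s : X ⟶ B) ↦ Hom_T(A, X)` on `Subo(B)`, with values in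
abelian groups. -/
def homDiagram (A B : T) : SuboCat E B ⥤ Ab.{u} :=
  ObjectProperty.ι _ ⋙ Over.forget B ⋙ preadditiveCoyoneda.obj (Opposite.op A)

/-- The colocalisation bifunctor `T⊥(A,B) := colim_{(s : X ⟶ B) ∈ Subo(B)} Hom_T(A, X)`. -/
noncomputable def Tbot (A B : T) : Ab.{u} :=
  colimit (homDiagram E A B)

/-- The map `T⊥(A,B) ⟶ T⊥(A',B)` induced by precomposition with `f : A' ⟶ A`. -/
noncomputable def TbotMapLeft {A A' : T} (f : A' ⟶ A) (B : T) :
    Tbot E A B ⟶ Tbot E A' B :=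
  colimMap
    { app := fun X => (preadditiveCoyoneda.map f.op).app X.obj.left
      naturality := by
        intro X Y g
        exact ((preadditiveCoyoneda.map f.op).naturality g.hom.left).symm ▸
          ((preadditiveCoyoneda.map f.op).naturality g.hom.left) }

namespace Triangulated.Subcategory

variable {C : Type*} [Category C] [HasZeroObject C] [HasShift C ℤ] [Preadditive C]
  [∀ n : ℤ, (shiftFunctor C n).Additive] [Pretriangulated C] (S : Subcategory C)
  [ObjectProperty.IsClosedUnderIsomorphisms S.P]

open ZeroObject in
lemma zero : S.P 0 := by
  obtain ⟨Z, hZ, hP⟩ := S.zero'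
  exact ObjectProperty.prop_of_iso _ hZ.isoZero hP

lemma ext₂ (T : Triangle C) (hT : T ∈ distTriang C) (h₁ : S.P T.obj₁) (h₃ : S.P T.obj₃) :
    S.P T.obj₂ := by
  obtain ⟨Y, hY, ⟨e⟩⟩ := S.ext₂' T hT h₁ h₃
  exact ObjectProperty.prop_of_iso _ e.symm hY

lemma ext₃ (T : Triangle C) (hT : T ∈ distTriang C) (h₁ : S.P T.obj₁) (h₂ : S.P T.obj₂) :
    S.P T.obj₃ :=
  S.ext₂ _ (rot_of_distTriang _ hT) h₂ (S.shift _ 1 h₁)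

end Triangulated.Subcategory

lemma AddCommGrpCat.colimit_rep_eq_zero {J : Type u} [SmallCategory J] [IsFiltered J]
    (F : J ⥤ AddCommGrpCat.{u}) (j : J) (x : F.obj j) (hx : colimit.ι F j x = 0) :
    ∃ (k : J) (u : j ⟶ k), F.map u x = 0 := by
  rw [show (0 : ToType (colimit F)) = colimit.ι F j 0 by simp,
    Concrete.colimit_rep_eq_iff_exists] at hx
  obtain ⟨k, u, v, huv⟩ := hx
  exact ⟨k, u, huv.trans (map_zero _)⟩

namespace SuboCat

open ZeroObject

variable [ObjectProperty.IsClosedUnderIsomorphisms E.P] {B : T}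

/-- `g - h` is killed by the structure map of `Y`, so that map factors through the cone of `g - h`,
which lies in `E`; the cone morphism equalises `g` and `h`. -/
lemma exists_hom_comp_eq (X Y : SuboCat E B) (g h : X ⟶ Y) :
    ∃ (Z : SuboCat E B) (c : Y ⟶ Z), g ≫ c = h ≫ c := by
  have hd : (g.hom.left - h.hom.left) ≫ Y.obj.hom = 0 := by
    simp [Preadditive.sub_comp, Over.w g.hom, Over.w h.hom]
  obtain ⟨Z, c, w, mem⟩ := distinguished_cocone_triangle (g.hom.left - h.hom.left)
  obtain ⟨r, hr⟩ := Triangle.yoneda_exact₂ _ mem Y.obj.hom hd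
  refine ⟨⟨Over.mk r, E.ext₃ _ mem X.2 Y.2⟩, ObjectProperty.homMk (Over.homMk c hr.symm), ?_⟩
  apply ObjectProperty.hom_ext
  apply Over.OverMorphism.ext
  rw [← sub_eq_zero]
  exact (Preadditive.sub_comp _ _ _).symm.trans (comp_distTriang_mor_zero₁₂ _ mem)

instance isFiltered (B : T) : IsFiltered (SuboCat E B) where
  nonempty := ⟨⟨Over.mk (0 : (0 : T) ⟶ B), E.zero⟩⟩
  cocone_objs X Y :=
    ⟨⟨Over.mk (biprod.desc X.obj.hom Y.obj.hom),
        E.ext₂ _ (binaryBiproductTriangle_distinguished X.obj.left Y.obj.left) X.2 Y.2⟩,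
      ObjectProperty.homMk (Over.homMk biprod.inl),
      ObjectProperty.homMk (Over.homMk biprod.inr), trivial⟩
  cocone_maps X Y g h := exists_hom_comp_eq E X Y g h

end SuboCat

section TbotMapLeft

variable {A A' A'' : T} (B : T)

lemma ι_TbotMapLeft (f : A' ⟶ A) (j : SuboCat E B) :
    colimit.ι (homDiagram E A B) j ≫ TbotMapLeft E f B =
      (preadditiveCoyoneda.map f.op).app j.obj.left ≫ colimit.ι (homDiagram E A' B) j :=
  ι_colimMap _ _

lemma TbotMapLeft_ι_apply (f : A' ⟶ A) (j : SuboCat E B) (φ : A ⟶ j.obj.left) :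
    TbotMapLeft E f B (colimit.ι (homDiagram E A B) j φ) =
      colimit.ι (homDiagram E A' B) j (f ≫ φ) :=
  congrArg (fun g => g φ) (ι_TbotMapLeft E B f j)

lemma TbotMapLeft_comp (f : A' ⟶ A) (g : A ⟶ A'') :
    TbotMapLeft E g B ≫ TbotMapLeft E f B = TbotMapLeft E (f ≫ g) B := by
  apply colimit.hom_ext
  intro j
  erw [← Category.assoc, ι_TbotMapLeft, Category.assoc, ι_TbotMapLeft, ι_TbotMapLeft,
    ← Category.assoc, ← NatTrans.comp_app, ← Functor.map_comp, op_comp]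
  rfl

lemma TbotMapLeft_zero : TbotMapLeft E (0 : A' ⟶ A) B = 0 := by
  apply colimit.hom_ext
  intro j
  rw [ι_TbotMapLeft, op_zero, Functor.map_zero, NatTrans.app_zero]
  exact Limits.zero_comp.trans Limits.comp_zero.symm

variable [ObjectProperty.IsClosedUnderIsomorphisms E.P] {f₁ : A' ⟶ A} {f₂ : A ⟶ A''}
  {f₃ : A'' ⟶ A'⟦(1:ℤ)⟧}

lemma exists_TbotMapLeft_eq_of_TbotMapLeft_eq_zero (hT : Triangle.mk f₁ f₂ f₃ ∈ distTriang T)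
    (x : Tbot E A B) (hx : TbotMapLeft E f₁ B x = 0) : ∃ y, TbotMapLeft E f₂ B y = x := by
  obtain ⟨j, φ, rfl⟩ := Concrete.colimit_exists_rep (homDiagram E A B) x
  obtain ⟨k, u, hu⟩ := AddCommGrpCat.colimit_rep_eq_zero (homDiagram E A' B) j (f₁ ≫ φ)
    ((TbotMapLeft_ι_apply E B f₁ j φ).symm.trans hx)
  obtain ⟨ψ, hψ⟩ :=
    Triangle.yoneda_exact₂ _ hT (φ ≫ u.hom.left) ((Category.assoc _ _ _).symm.trans hu)
  refine ⟨colimit.ι (homDiagram E A'' B) k ψ, ?_⟩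
  have hstage : colimit.ι (homDiagram E A B) k (f₂ ≫ ψ) = colimit.ι (homDiagram E A B) j φ :=
    (congrArg (fun y : A ⟶ k.obj.left => colimit.ι (homDiagram E A B) k y) hψ).symm.trans
      (colimit.w_apply (homDiagram E A B) u φ)
  exact (TbotMapLeft_ι_apply E B f₂ k ψ).trans hstage

end TbotMapLeft

theorem Tbot_cohomological_fst [ObjectProperty.IsClosedUnderIsomorphisms E.P]
    {A' A A'' : T} (f₁ : A' ⟶ A) (f₂ : A ⟶ A'') (f₃ : A'' ⟶ A'⟦(1:ℤ)⟧)
    (hT : Triangle.mk f₁ f₂ f₃ ∈ distTriang T) (B : T) :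
    Function.Exact ⇑(TbotMapLeft E f₂ B) ⇑(TbotMapLeft E f₁ B) := by
  have hcomp : TbotMapLeft E f₂ B ≫ TbotMapLeft E f₁ B = 0 := by
    rw [TbotMapLeft_comp, show f₁ ≫ f₂ = 0 from comp_distTriang_mor_zero₁₂ _ hT,
      TbotMapLeft_zero]
  intro x
  refine ⟨exists_TbotMapLeft_eq_of_TbotMapLeft_eq_zero E B hT x, ?_⟩
  rintro ⟨y, rfl⟩
  exact congrArg (fun g => g y) hcomp
end

section
/- Universal property of the colocalisation: let G, H : T ⥤ Ab be homological functors and suppose H is colocal, i.e. the canonical natural transformation R⊥H ⟶ H is an isomorphism. Then composition with the canonical natural transformation R⊥G ⟶ G gives a bijection between natural transformations H ⟶ R⊥G and natural transformations H ⟶ G. -/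
open CategoryTheory Category Limits Pretriangulated Triangulated

universe u

variable {T : Type u} [SmallCategory T] [HasZeroObject T] [Preadditive T]
  [HasShift T ℤ] [∀ n : ℤ, (shiftFunctor T n).Additive] [Pretriangulated T]

variable (E : Triangulated.Subcategory T)

/-- The map `R⊥F(B) ⟶ R⊥F(B')` induced by `f : B ⟶ B'` via postcomposition. -/
noncomputable abbrev colocMap (F : T ⥤ Ab.{u}) {B B' : T} (f : B ⟶ B') :
    coloc E F B ⟶ coloc E F B' :=
  colimit.desc (suboDiagram E F B)
    { pt := coloc E F B'
      ι :=
        { app := fun X => colimit.ι (suboDiagram E F B') ⟨Over.mk (X.obj.hom ≫ f), X.property⟩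
          naturality := by
            intro X Y g
            dsimp [suboDiagram]
            refine Eq.trans ?_ (comp_id _).symm
            exact colimit.w (suboDiagram E F B')
              (show (⟨Over.mk (X.obj.hom ≫ f), X.property⟩ : SuboCat E B') ⟶
                  ⟨Over.mk (Y.obj.hom ≫ f), Y.property⟩ from
                ObjectProperty.homMk (Over.homMk g.hom.left (by dsimp; rw [← assoc, Over.w g.hom]))) } }

@[simp]
lemma ι_colocMap (F : T ⥤ Ab.{u}) {B B' : T} (f : B ⟶ B') (X : SuboCat E B) :
    colimit.ι (suboDiagram E F B) X ≫ colocMap E F f =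
      colimit.ι (suboDiagram E F B') ⟨Over.mk (X.obj.hom ≫ f), X.property⟩ :=
  colimit.ι_desc _ _

lemma coloc_ι_eq (F : T ⥤ Ab.{u}) {B : T} {A : T} {f g : A ⟶ B} (hA : E.P A) (hfg : f = g) :
    colimit.ι (suboDiagram E F B) ⟨Over.mk f, hA⟩ =
      colimit.ι (suboDiagram E F B) ⟨Over.mk g, hA⟩ := by
  subst hfg; rfl

/-- The right colocalisation functor `R⊥F : T ⥤ Ab`. -/
noncomputable abbrev colocFunctor (F : T ⥤ Ab.{u}) : T ⥤ Ab.{u} where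
  obj B := coloc E F B
  map f := colocMap E F f
  map_id B := by
    apply colimit.hom_ext
    intro X
    try dsimp only
    rw [ι_colocMap, comp_id]
    exact coloc_ι_eq E F X.property (by simp)
  map_comp {B B' B''} f g := by
    apply colimit.hom_ext
    intro X
    try dsimp only
    simp only [← assoc, ι_colocMap]
    erw [ι_colocMap]
    exact coloc_ι_eq E F X.property (by simp)

/-- The canonical natural transformation `R⊥F ⟶ F`, assembled from the maps
`F(s) : F(X) ⟶ F(B)` for objects `s : X ⟶ B` of `Subo(B)`. -/
noncomputable def colocCounit (F : T ⥤ Ab.{u}) : colocFunctor E F ⟶ F where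
  app B := colimit.desc (suboDiagram E F B)
    { pt := F.obj B
      ι :=
        { app := fun X => F.map X.obj.hom
          naturality := by
            intro X Y g
            dsimp [suboDiagram]
            rw [comp_id, ← F.map_comp, Over.w g.hom] } }
  naturality := by
    intro B B' f
    apply colimit.hom_ext
    intro X
    dsimp [colocFunctor]
    rw [← assoc, ι_colocMap]
    erw [colimit.ι_desc, colimit.ι_desc_assoc]
    simp
    rfl

/-!
The inverse sends `β : H ⟶ G` to `ε_H⁻¹ ≫ R⊥β`, where `ε` is the counit `R⊥ ⟶ 𝟭`. That it is a
left inverse rests on the identity `ε_{R⊥G} = R⊥ε_G`: for `s : X ⟶ B` with `X` in `E`, both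
`R⊥G(s)` and `ε_X` followed by the inclusion at `s` send the summand at `t : Y ⟶ X` to the
inclusion at `t ≫ s`. With naturality of `ε` this gives `ε_H ≫ α = R⊥(α ≫ ε_G)`.
-/

@[simp]
lemma ι_colocCounit (F : T ⥤ Ab.{u}) {B : T} (S : SuboCat E B) :
    colimit.ι (suboDiagram E F B) S ≫ (colocCounit E F).app B = F.map S.obj.hom :=
  colimit.ι_desc _ _

@[simp]
lemma ι_colocCounit_assoc (F : T ⥤ Ab.{u}) {B : T} (S : SuboCat E B) {Z : Ab.{u}}
    (h : F.obj B ⟶ Z) :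
    colimit.ι (suboDiagram E F B) S ≫ (colocCounit E F).app B ≫ h = F.map S.obj.hom ≫ h := by
  rw [← assoc, ι_colocCounit]
  rfl

lemma colocCounit_app_comp_ι (F : T ⥤ Ab.{u}) {B : T} (S : SuboCat E B) :
    (colocCounit E F).app S.obj.left ≫ colimit.ι (suboDiagram E F B) S =
      colocMap E F S.obj.hom := by
  apply colimit.hom_ext
  intro U
  rw [ι_colocMap]
  erw [ι_colocCounit_assoc]
  exact colimit.w (suboDiagram E F B)
    (ObjectProperty.homMk (Over.homMk U.obj.hom) :
      (⟨Over.mk (U.obj.hom ≫ S.obj.hom), U.property⟩ : SuboCat E B) ⟶ S)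

/-- The colocalisation `R⊥β : R⊥H ⟶ R⊥G` of a natural transformation `β : H ⟶ G`. -/
noncomputable def colocNatMap {G H : T ⥤ Ab.{u}} (β : H ⟶ G) :
    colocFunctor E H ⟶ colocFunctor E G where
  app B := colimMap (Functor.whiskerLeft (ObjectProperty.ι _ ⋙ Over.forget B) β)
  naturality B B' f := by
    apply colimit.hom_ext
    intro S
    dsimp only [colocFunctor]
    conv_lhs => erw [← assoc, ι_colocMap, ι_colimMap]
    conv_rhs => erw [← assoc, ι_colimMap, assoc, ι_colocMap]
    rfl

@[simp]
lemma ι_colocNatMap {G H : T ⥤ Ab.{u}} (β : H ⟶ G) {B : T} (S : SuboCat E B) :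
    colimit.ι (suboDiagram E H B) S ≫ (colocNatMap E β).app B =
      β.app S.obj.left ≫ colimit.ι (suboDiagram E G B) S :=
  ι_colimMap _ _

@[simp]
lemma ι_colocNatMap_assoc {G H : T ⥤ Ab.{u}} (β : H ⟶ G) {B : T} (S : SuboCat E B)
    {Z : Ab.{u}} (h : coloc E G B ⟶ Z) :
    colimit.ι (suboDiagram E H B) S ≫ (colocNatMap E β).app B ≫ h =
      β.app S.obj.left ≫ colimit.ι (suboDiagram E G B) S ≫ h := by
  rw [← assoc, ι_colocNatMap]
  exact assoc _ _ _

lemma colocNatMap_comp {F G H : T ⥤ Ab.{u}} (α : F ⟶ G) (β : G ⟶ H) :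
    colocNatMap E (α ≫ β) = colocNatMap E α ≫ colocNatMap E β := by
  ext B : 2
  apply colimit.hom_ext
  intro S
  rw [NatTrans.comp_app, ι_colocNatMap_assoc, ι_colocNatMap]
  erw [ι_colocNatMap]
  exact assoc _ _ _

lemma colocNatMap_comp_colocCounit {G H : T ⥤ Ab.{u}} (β : H ⟶ G) :
    colocNatMap E β ≫ colocCounit E G = colocCounit E H ≫ β := by
  ext B : 2
  apply colimit.hom_ext
  intro S
  rw [NatTrans.comp_app, NatTrans.comp_app, ι_colocNatMap_assoc, ι_colocCounit_assoc]
  erw [ι_colocCounit]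
  exact (β.naturality _).symm

lemma colocCounit_colocFunctor (F : T ⥤ Ab.{u}) :
    colocCounit E (colocFunctor E F) = colocNatMap E (colocCounit E F) := by
  ext B : 2
  apply colimit.hom_ext
  intro S
  rw [ι_colocCounit, ι_colocNatMap, colocCounit_app_comp_ι]

lemma colocCounit_comp_eq_colocNatMap {G H : T ⥤ Ab.{u}} (α : H ⟶ colocFunctor E G) :
    colocCounit E H ≫ α = colocNatMap E (α ≫ colocCounit E G) := by
  rw [← colocNatMap_comp_colocCounit, colocCounit_colocFunctor, colocNatMap_comp]

theorem colocalisation_universal_property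
    (G H : T ⥤ Ab.{u})
    (hH : IsIso (colocCounit E H)) :
    Function.Bijective (fun (α : H ⟶ colocFunctor E G) => α ≫ colocCounit E G) := by
  refine Function.bijective_iff_has_inverse.mpr
    ⟨fun β => inv (colocCounit E H) ≫ colocNatMap E β, fun α => ?_, fun β => ?_⟩
  · dsimp only
    rw [← colocCounit_comp_eq_colocNatMap, IsIso.inv_hom_id_assoc]
  · dsimp only
    rw [assoc, colocNatMap_comp_colocCounit, IsIso.inv_hom_id_assoc]
end

section
/- Exactness of the localisation–colocalisation sequence at F(B): let F : T ⥤ Ab be a homological functor, B an object of T and x ∈ F(B). Then there exists an E-weak equivalence t : B → C with F(t)(x) = 0 if and only if there exist an object E of E, a morphism s : E → B and an element y ∈ F(E) with F(s)(y) = x. (Equivalently, the kernel of the canonical map F(B) → RF(B) equals the image of the canonical map R⊥F(B) → F(B).) -/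
/-! An `E`-weak equivalence `t : B ⟶ C` is exactly the second map of a distinguished
triangle `X ⟶ B ⟶ C ⟶ X⟦1⟧` with `X ∈ E`, and `F` makes `F X ⟶ F B ⟶ F C` exact. -/

open CategoryTheory Category Limits Pretriangulated Triangulated

lemma CategoryTheory.Functor.map_mor₂_apply_eq_zero_iff {C : Type*} [Category C]
    [HasZeroObject C] [Preadditive C] [HasShift C ℤ] [∀ n : ℤ, (shiftFunctor C n).Additive]
    [Pretriangulated C] (F : C ⥤ Ab) [F.IsHomological] {K : Triangle C}
    (hK : K ∈ distTriang C) (x : F.obj K.obj₂) :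
    F.map K.mor₂ x = 0 ↔ ∃ y, F.map K.mor₁ y = x :=
  (ShortComplex.ab_exact_iff_function_exact _).1 (F.map_distinguished_exact _ hK) x

/-- **Exactness of the localisation–colocalisation sequence at `F(B)`.**
Let `T` be a triangulated category, `E` a thick subcategory, `F : T ⥤ Ab` a
homological functor, `B` an object of `T` and `x ∈ F(B)`.  Then there exists an
`E`-weak equivalence `t : B ⟶ C` with `F(t)(x) = 0` if and only if there exist
an object `X` of `E`, a morphism `s : X ⟶ B` and an element `y ∈ F(X)` with
`F(s)(y) = x`. -/
theorem exact_at_middle {T : Type*} [Category T] [HasZeroObject T] [Preadditive T]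
    [HasShift T ℤ] [∀ n : ℤ, (shiftFunctor T n).Additive] [Pretriangulated T]
    [IsTriangulated T] (E : ObjectProperty T) [E.IsTriangulated] [E.IsClosedUnderIsomorphisms]
    (hthick : ∀ ⦃X Y : T⦄ (i : X ⟶ Y) (r : Y ⟶ X), i ≫ r = 𝟙 X → E Y → E X)
    (F : T ⥤ Ab) [F.IsHomological] (B : T) (x : F.obj B) :
    (∃ (C : T) (t : B ⟶ C), E.trW t ∧ F.map t x = 0) ↔
      (∃ (X : T) (_ : E X) (s : X ⟶ B) (y : F.obj X), F.map s y = x) := by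
  constructor
  · rintro ⟨C, t, ht, hx⟩
    obtain ⟨X, s, h, hK, hX⟩ := (E.trW_iff' t).1 ht
    obtain ⟨y, hy⟩ := (F.map_mor₂_apply_eq_zero_iff hK x).1 hx
    exact ⟨X, hX, s, y, hy⟩
  · rintro ⟨X, hX, s, y, rfl⟩
    obtain ⟨C, t, h, hK⟩ := distinguished_cocone_triangle s
    exact ⟨C, t, (E.trW_iff' t).2 ⟨X, s, h, hK, hX⟩,
      (F.map_mor₂_apply_eq_zero_iff hK _).2 ⟨y, rfl⟩⟩
end
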